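/- For every integer k ≥ 2, every greedy defining set of (L_k, lex) has cardinality at least 6n²/16 = (3/8)·4^k, where n = 2^k is the order of L_k. -/

import Mathlib

open SimpleGraph

/-- First-Fit (greedy) coloring of `G` with respect to the vertex ordering given by the
injective position function `ord` (vertex `u` comes before `v` iff `ord u < ord v`).
Each vertex receives the smallest positive integer not used on earlier neighbors. -/
noncomputable def firstFit {V : Type*} (G : SimpleGraph V) (ord : V → ℕ) : V → ℕ :=
  (InvImage.wf ord Nat.lt_wfRel.wf).fix
    (fun v ih => sInf {c : ℕ | 1 ≤ c ∧ ∀ u, ∀ h : ord u < ord v, G.Adj u v → ih u h ≠ c})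

/-- `FFColors G ord` is the number of colors used by the First-Fit coloring. -/
noncomputable def FFColors {V : Type*} [Fintype V] (G : SimpleGraph V) (ord : V → ℕ) : ℕ :=
  (Finset.univ.image (firstFit G ord)).card

open Classical in
/-- First-Fit coloring of `(G, ord)` subject to the pre-coloring `C₀` on the set `S`:
vertices of `S` keep their pre-assigned colors and are skipped by the scan; every other
vertex receives the smallest positive integer not already assigned (or pre-assigned)
to a neighbor. -/
noncomputable def firstFitWith {V : Type*} (G : SimpleGraph V) (ord : V → ℕ)
    (S : Set V) (C₀ : V → ℕ) : V → ℕ :=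
  (InvImage.wf ord Nat.lt_wfRel.wf).fix
    (fun v ih =>
      if v ∈ S then C₀ v
      else sInf {c : ℕ | 1 ≤ c ∧ (∀ u, G.Adj u v → u ∈ S → C₀ u ≠ c) ∧
        ∀ u, ∀ h : ord u < ord v, G.Adj u v → u ∉ S → ih u h ≠ c})

/-- Position function of the lexicographic order on `V × W` induced by the position
functions `σ` on `V` and `σ'` on `W` (for injective `σ, σ'`: `(u,v)` comes before
`(u',v')` iff `σ u < σ u'`, or `u = u'` and `σ' v < σ' v'`). -/
noncomputable def lexPos {V W : Type*} [Fintype W] (σ : V → ℕ) (σ' : W → ℕ) : V × W → ℕ :=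
  fun p => σ p.1 * (Finset.univ.sup σ' + 1) + σ' p.2

/-- A proper coloring with colors in the positive integers. -/
def IsProperColoring {V : Type*} (G : SimpleGraph V) (C : V → ℕ) : Prop :=
  (∀ v, 1 ≤ C v) ∧ ∀ ⦃u v⦄, G.Adj u v → C u ≠ C v

/-- `D` is a `(C, ord)`-descent: `D = {v} ∪ N` where `C v = y`, `x < y` is a (positive)
color, `N` is the set of neighbors of `v` of color `x`, and every `u ∈ N` comes after
`v` in the order. -/
def IsDescent {V : Type*} (G : SimpleGraph V) (ord : V → ℕ) (C : V → ℕ) (D : Set V) : Prop :=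
  ∃ v x, 1 ≤ x ∧ x < C v ∧
    (∀ u, G.Adj u v → C u = x → ord v < ord u) ∧
    D = insert v {u | G.Adj u v ∧ C u = x}

/-- The Grundy number: the maximum of `FFColors G ord` over all vertex orderings. -/
noncomputable def grundy {V : Type*} [Fintype V] (G : SimpleGraph V) : ℕ :=
  sSup {n | ∃ ord : V → ℕ, Function.Injective ord ∧ FFColors G ord = n}

/-- The independence number of `G`. -/
noncomputable def indepNum {V : Type*} [Fintype V] (G : SimpleGraph V) : ℕ :=
  sSup {n | ∃ s : Finset V, (∀ u ∈ s, ∀ v ∈ s, ¬ G.Adj u v) ∧ s.card = n}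

/-- An `m × n` Latin rectangle: entries in `{1, …, n}`, no repeats in rows or columns. -/
def IsLatinRectangle {m n : ℕ} (R : Fin m → Fin n → ℕ) : Prop :=
  (∀ i j, R i j ∈ Finset.Icc 1 n) ∧ (∀ i, Function.Injective (R i)) ∧
    (∀ j, Function.Injective (fun i => R i j))

/-- `S` is a greedy defining set of the rectangle `R` (cells scanned in lexicographic,
i.e. row-by-row, order): the greedy completion, which skips the cells of `S` (fixed to
their values in `R`) and places in each other cell the smallest positive integer not yet
appearing in its row or column, reproduces `R`.  This is First-Fit on the rook's graph
`K_m □ K_n` subject to the pre-coloring of `S` by `R`. -/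
noncomputable def IsRectGDS {m n : ℕ} (R : Fin m → Fin n → ℕ) (S : Set (Fin m × Fin n)) : Prop :=
  firstFitWith ((⊤ : SimpleGraph (Fin m)).boxProd (⊤ : SimpleGraph (Fin n)))
    (lexPos Fin.val Fin.val) S (fun p => R p.1 p.2) = fun p => R p.1 p.2

/-- The Latin square `L_k` of order `2^k`: the entry in row `i`, column `j` is
`2^k - (i XOR j)`; equivalently the `k`-fold tensor product of `[[2,1],[1,2]]`. -/
def Lsquare (k : ℕ) : Fin (2 ^ k) → Fin (2 ^ k) → ℕ :=
  fun i j => 2 ^ k - (i.val ^^^ j.val)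

/-!
A cell `(i, j)` outside a greedy defining set receives `2^k - (i ⊕ j)` only because every
smaller symbol `2^k - t` already sits in its row or column, in a fixed cell or in a cell
scanned earlier. In row `i` and column `j` that symbol occupies `(i, i ⊕ t)` and `(j ⊕ t, j)`;
when both come after `(i, j)`, the set must contain one of these three cells. Since
`(2^K p + x) ⊕ (2^K q + y) = 2^K (p ⊕ q) + (x ⊕ y)`, each of the `4^(k-2)` blocks of size `4`
of `L_k` inherits all such triples of `L_2`, and meeting the twelve triples of `L_2` takes six
cells.
-/

open Finset

section FirstFit

variable {V : Type*} {G : SimpleGraph V} {ord : V → ℕ} {S : Set V} {C : V → ℕ}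

open Classical in
theorem firstFitWith_apply (v : V) :
    firstFitWith G ord S C v =
      if v ∈ S then C v
      else sInf {c : ℕ | 1 ≤ c ∧ (∀ u, G.Adj u v → u ∈ S → C u ≠ c) ∧
        ∀ u, ord u < ord v → G.Adj u v → u ∉ S → firstFitWith G ord S C u ≠ c} :=
  WellFounded.fix_eq _ _ v

theorem exists_adj_of_firstFitWith_eq_self (hC : firstFitWith G ord S C = C) {v : V}
    (hv : v ∉ S) {c : ℕ} (hc : 1 ≤ c) (hcv : c < C v) :
    ∃ u, G.Adj u v ∧ C u = c ∧ (u ∈ S ∨ ord u < ord v) := by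
  have hCv := congrFun hC v
  rw [firstFitWith_apply, if_neg hv, hC] at hCv
  by_contra! hblocked
  rw [← hCv] at hcv
  refine Nat.notMem_of_lt_sInf hcv ⟨hc, fun u hadj huS hu => ?_, fun u hlt hadj _ hu => ?_⟩
  · exact (hblocked u hadj hu).1 huS
  · exact (hblocked u hadj hu).2.not_gt hlt

end FirstFit

theorem lexPos_lt_lexPos_iff_of_fst_eq {V W : Type*} [Fintype W] (σ : V → ℕ) (σ' : W → ℕ)
    {p q : V × W} (h : p.1 = q.1) : lexPos σ σ' p < lexPos σ σ' q ↔ σ' p.2 < σ' q.2 := by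
  simp [lexPos, h]

theorem lexPos_lt_lexPos_iff_of_snd_eq {V W : Type*} [Fintype W] (σ : V → ℕ) (σ' : W → ℕ)
    {p q : V × W} (h : p.2 = q.2) : lexPos σ σ' p < lexPos σ σ' q ↔ σ p.1 < σ q.1 := by
  simp [lexPos, h]

theorem Lsquare_eq_two_pow_sub_iff {k t : ℕ} (ht : t < 2 ^ k) (i j : Fin (2 ^ k)) :
    Lsquare k i j = 2 ^ k - t ↔ i.val ^^^ j.val = t := by
  have := Nat.xor_lt_two_pow i.isLt j.isLt
  simp only [Lsquare]
  omega

theorem two_pow_mul_add_xor_two_pow_mul_add {K p q i j : ℕ} (hi : i < 2 ^ K) (hj : j < 2 ^ K) :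
    (2 ^ K * p + i) ^^^ (2 ^ K * q + j) = 2 ^ K * (p ^^^ q) + (i ^^^ j) := by
  rw [← Nat.div_add_mod ((2 ^ K * p + i) ^^^ (2 ^ K * q + j)) (2 ^ K), Nat.xor_div_two_pow,
    Nat.xor_mod_two_pow, Nat.mul_add_div (by positivity), Nat.mul_add_div (by positivity),
    Nat.mul_add_mod, Nat.mul_add_mod, Nat.div_eq_of_lt hi, Nat.div_eq_of_lt hj,
    Nat.mod_eq_of_lt hi, Nat.mod_eq_of_lt hj, add_zero, add_zero]

/-- `{(i, j), (i, i ⊕ t), (j ⊕ t, j)}` is a descent of `L_k` (see `IsDescent`): the cells of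
the row and column of `(i, j)` holding the smaller symbol `2^k - t` both come after it. -/
def MeetsXorDescents (n : ℕ) (S : Finset (ℕ × ℕ)) : Prop :=
  ∀ i < n, ∀ j < n, ∀ t < n, i ^^^ j < t → j < i ^^^ t → i < j ^^^ t →
    (i, j) ∈ S ∨ (i, i ^^^ t) ∈ S ∨ (j ^^^ t, j) ∈ S

theorem meetsXorDescents_of_isRectGDS {k : ℕ} {S : Finset (Fin (2 ^ k) × Fin (2 ^ k))}
    (hS : IsRectGDS (Lsquare k) ↑S) :
    MeetsXorDescents (2 ^ k) (S.image fun c => (c.1.val, c.2.val)) := by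
  intro i hi j hj t ht hij hjt hit
  set v : Fin (2 ^ k) × Fin (2 ^ k) := (⟨i, hi⟩, ⟨j, hj⟩)
  by_cases hv : v ∈ S
  · exact .inl (mem_image_of_mem _ hv)
  obtain ⟨u, hadj, hu, hfixed⟩ := exists_adj_of_firstFitWith_eq_self hS (v := v)
    (by simpa using hv) (c := 2 ^ k - t) (by omega) (by simp only [v, Lsquare]; omega)
  rw [Lsquare_eq_two_pow_sub_iff ht] at hu
  rcases SimpleGraph.boxProd_adj.mp hadj with ⟨-, hcol⟩ | ⟨-, hrow⟩
  · have hu1 : u.1.val = j ^^^ t := by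
      rw [← hu, hcol, Nat.xor_comm]; exact (Nat.xor_xor_cancel_right _ _).symm
    have huS : u ∈ S := by
      refine mem_coe.mp (hfixed.resolve_right fun hlt => ?_)
      rw [lexPos_lt_lexPos_iff_of_snd_eq _ _ hcol] at hlt
      simp only [v] at hlt
      omega
    exact .inr (.inr (mem_image.mpr ⟨u, huS, by rw [hu1, hcol]⟩))
  · have hu2 : u.2.val = i ^^^ t := by rw [← hu, hrow, Nat.xor_xor_cancel_left]
    have huS : u ∈ S := by
      refine mem_coe.mp (hfixed.resolve_right fun hlt => ?_)
      rw [lexPos_lt_lexPos_iff_of_fst_eq _ _ hrow] at hlt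
      simp only [v] at hlt
      omega
    exact .inr (.inl (mem_image.mpr ⟨u, huS, by rw [hu2, hrow]⟩))

def cellBlock (m : ℕ) (S : Finset (ℕ × ℕ)) (b : ℕ × ℕ) : Finset (ℕ × ℕ) :=
  {c ∈ S | (c.1 / m, c.2 / m) = b}.image fun c => (c.1 % m, c.2 % m)

theorem card_cellBlock (m : ℕ) (S : Finset (ℕ × ℕ)) (b : ℕ × ℕ) :
    (cellBlock m S b).card = {c ∈ S | (c.1 / m, c.2 / m) = b}.card := by
  refine card_image_of_injOn fun c hc d hd hcd => ?_
  have hdiv := (mem_filter.mp hc).2.trans (mem_filter.mp hd).2.symm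
  simp only [Prod.mk.injEq] at hdiv hcd
  ext
  · rw [← Nat.div_add_mod c.1 m, ← Nat.div_add_mod d.1 m, hdiv.1, hcd.1]
  · rw [← Nat.div_add_mod c.2 m, ← Nat.div_add_mod d.2 m, hdiv.2, hcd.2]

namespace MeetsXorDescents

variable {K L : ℕ} {S : Finset (ℕ × ℕ)}

theorem cellBlock (h : MeetsXorDescents (2 ^ (L + K)) S) {p q : ℕ} (hp : p < 2 ^ L)
    (hq : q < 2 ^ L) : MeetsXorDescents (2 ^ K) (cellBlock (2 ^ K) S (p, q)) := by
  rw [pow_add, mul_comm] at h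
  have hm : 0 < 2 ^ K := by positivity
  have hmem {x y : ℕ} (hx : x < 2 ^ K) (hy : y < 2 ^ K)
      (hxy : (2 ^ K * p + x, 2 ^ K * q + y) ∈ S) :
      (x, y) ∈ _root_.cellBlock (2 ^ K) S (p, q) := by
    refine mem_image.mpr ⟨_, mem_filter.mpr ⟨hxy, ?_⟩, ?_⟩ <;>
      simp [Nat.mul_add_div hm, Nat.div_eq_of_lt, Nat.mod_eq_of_lt, hx, hy]
  have hlt {r x : ℕ} (hr : r < 2 ^ L) (hx : x < 2 ^ K) : 2 ^ K * r + x < 2 ^ K * 2 ^ L :=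
    calc 2 ^ K * r + x < 2 ^ K * (r + 1) := by rw [mul_add_one]; omega
      _ ≤ 2 ^ K * 2 ^ L := Nat.mul_le_mul_left _ hr
  intro i hi j hj t ht hij hjt hit
  have hpq : p ^^^ q < 2 ^ L := Nat.xor_lt_two_pow hp hq
  have hxor {a b x y : ℕ} (hx : x < 2 ^ K) (hy : y < 2 ^ K) :=
    two_pow_mul_add_xor_two_pow_mul_add (p := a) (q := b) hx hy
  have hrow : p ^^^ (p ^^^ q) = q := Nat.xor_xor_cancel_left p q
  have hcol : q ^^^ (p ^^^ q) = p := by rw [Nat.xor_comm p, Nat.xor_xor_cancel_left]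
  have := h (2 ^ K * p + i) (hlt hp hi) (2 ^ K * q + j) (hlt hq hj) (2 ^ K * (p ^^^ q) + t)
    (hlt hpq ht) (by rw [hxor hi hj]; omega) (by rw [hxor hi ht, hrow]; omega)
    (by rw [hxor hj ht, hcol]; omega)
  rw [hxor hi ht, hxor hj ht, hrow, hcol] at this
  have hit' := Nat.xor_lt_two_pow hi ht
  have hjt' := Nat.xor_lt_two_pow hj ht
  rcases this with h | h | h
  · exact .inl (hmem hi hj h)
  · exact .inr (.inl (hmem hi hit' h))
  · exact .inr (.inr (hmem hjt' hj h))

theorem mul_le_card (h : MeetsXorDescents (2 ^ (L + K)) S) {c : ℕ}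
    (hblock : ∀ T, MeetsXorDescents (2 ^ K) T → c ≤ T.card) : 4 ^ L * c ≤ S.card := by
  set blocks := range (2 ^ L) ×ˢ range (2 ^ L)
  set blockOf : ℕ × ℕ → ℕ × ℕ := fun x => (x.1 / 2 ^ K, x.2 / 2 ^ K)
  calc 4 ^ L * c = ∑ _b ∈ blocks, c := by
        rw [sum_const, card_product, card_range, smul_eq_mul, ← mul_pow]; norm_num
    _ ≤ ∑ b ∈ blocks, {x ∈ S | blockOf x = b}.card := by
        refine sum_le_sum fun b hb => ?_
        rw [← card_cellBlock]
        obtain ⟨hb1, hb2⟩ := mem_product.mp hb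
        exact hblock _ (h.cellBlock (mem_range.mp hb1) (mem_range.mp hb2))
    _ = {x ∈ S | blockOf x ∈ blocks}.card := sum_card_fiberwise_eq_card_filter _ _ _
    _ ≤ S.card := card_filter_le _ _

theorem six_le_card (h : MeetsXorDescents 4 S) : 6 ≤ S.card := by
  -- `h` unfolds to the twelve descents of `L_2`; `omega` solves the resulting 0-1 covering
  -- problem, whose linear relaxation only gives `5`.
  simp (config := {decide := true}) only [MeetsXorDescents, Nat.forall_lt_succ_right,
    Nat.not_lt_zero, IsEmpty.forall_iff, forall_const, true_and, Nat.reduceXor, and_true] at h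
  set x : ℕ × ℕ → ℕ := fun c => if c ∈ S then 1 else 0
  have hmem (c : ℕ × ℕ) : c ∈ S ↔ 0 < x c := by by_cases hc : c ∈ S <;> simp [x, hc]
  have hcard : ∑ c ∈ range 4 ×ˢ range 4, x c ≤ S.card := by
    rw [← card_filter, filter_mem_eq_inter]
    exact card_le_card inter_subset_right
  simp only [sum_product, sum_range_succ, sum_range_zero, zero_add] at hcard
  simp only [hmem, ← Nat.add_pos_iff_pos_or_pos] at h
  omega

end MeetsXorDescents

/-- For `k ≥ 2`, every greedy defining set of `(L_k, lex)` has cardinality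
at least `6n²/16 = (3/8)·4^k`, where `n = 2^k`. -/
theorem Lk_gds_lower_bound (k : ℕ) (hk : 2 ≤ k)
    (S : Finset (Fin (2 ^ k) × Fin (2 ^ k))) (hS : IsRectGDS (Lsquare k) ↑S) :
    6 * ((2 : ℝ) ^ k) ^ 2 / 16 = (3 / 8 : ℝ) * 4 ^ k ∧
      6 * ((2 : ℝ) ^ k) ^ 2 / 16 ≤ (S.card : ℝ) := by
  obtain ⟨L, rfl⟩ : ∃ L, k = L + 2 := ⟨k - 2, by omega⟩
  have hpow : ((2 : ℝ) ^ (L + 2)) ^ 2 = 16 * 4 ^ L := by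
    rw [← pow_mul, pow_mul']; norm_num [pow_add, mul_comm]
  have hcard := (meetsXorDescents_of_isRectGDS hS).mul_le_card (K := 2) fun T hT => hT.six_le_card
  rw [card_image_of_injective _ fun a b hab => by simpa [Prod.ext_iff, Fin.ext_iff] using hab]
    at hcard
  refine ⟨by rw [hpow]; ring, ?_⟩
  rw [hpow, show (6 * (16 * 4 ^ L) / 16 : ℝ) = ((4 ^ L * 6 : ℕ) : ℝ) by push_cast; ring]
  exact_mod_cast hcard
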